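/- Let V be a finite-dimensional vector space over a field, Ω₀ a subset of a group G acting linearly on V whose image spans the same subspace of End(V) as a larger bounded set Ω ⊇ Ω₀ (Ω₀ Zariski dense in Ω in the sense that span ρ(Ω₀) ⊇ ρ(Ω)). Then there is a constant M such that for every linear endomorphism Λ of V and every v ∈ V: sup_{ω∈Ω} ‖Λ(ω·v)‖ ≤ M · sup_{ω∈Ω₀} ‖Λ(ω·v)‖. -/
import Mathlib

open Finset in
/-- Key lemma: given a finite family `b` in a normed space `E` and a bound `R`,
there is `M ≥ 0` such that any continuous linear map `T` is bounded on
`R`-bounded linear combinations of the `b i` by `M` times a bound on the `‖T (b i)‖`. -/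
lemma key_comb_bound {k E F : Type*} [NontriviallyNormedField k]
    [NormedAddCommGroup E] [NormedSpace k E]
    [NormedAddCommGroup F] [NormedSpace k F] :
    ∀ (n : ℕ) (b : Fin n → E) (R : ℝ), ∃ M : ℝ, 0 ≤ M ∧
      ∀ (T : E →L[k] F) (m : ℝ), 0 ≤ m → (∀ i, ‖T (b i)‖ ≤ m) →
      ∀ c : Fin n → k, ‖∑ i, c i • b i‖ ≤ R → ‖T (∑ i, c i • b i)‖ ≤ M * m := by
  intro n
  induction n with
  | zero =>
    intro b R
    exact ⟨0, le_refl 0, by simp⟩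
  | succ n ih =>
    intro b R
    set bl : E := b (Fin.last n) with hbl
    by_cases hδ : ∃ δ : ℝ, 0 < δ ∧ ∀ a : Fin n → k, δ ≤ ‖bl + ∑ i, a i • b i.castSucc‖
    · -- the last vector is uniformly far from the span of the others
      obtain ⟨δ, hδ0, hδfar⟩ := hδ
      set Q : ℝ := max (R / δ) 0 with hQ
      have hQ0 : 0 ≤ Q := le_max_right _ _
      obtain ⟨M', hM'0, hM'⟩ := ih (fun i => b i.castSucc) (max R 0 + Q * ‖bl‖)
      refine ⟨M' + Q, by positivity, fun T m hm hTb c hcR => ?_⟩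
      set x : E := ∑ i, c i • b i with hx
      have hxsplit : x = (∑ i : Fin n, c i.castSucc • b i.castSucc) + c (Fin.last n) • bl := by
        rw [hx, Fin.sum_univ_castSucc]
      have hR0 : 0 ≤ R := le_trans (norm_nonneg x) hcR
      -- bound on the last coefficient
      have hclast : ‖c (Fin.last n)‖ ≤ Q := by
        by_cases h0 : c (Fin.last n) = 0
        · simp [h0, hQ0]
        · have hkey : ‖c (Fin.last n)‖ * δ ≤ ‖x‖ := by
            have : x = c (Fin.last n) •
                (bl + ∑ i : Fin n, (c i.castSucc / c (Fin.last n)) • b i.castSucc) := by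
              rw [hxsplit, smul_add, Finset.smul_sum]
              have : ∀ i : Fin n, c (Fin.last n) • (c i.castSucc / c (Fin.last n)) •
                  b i.castSucc = c i.castSucc • b i.castSucc := by
                intro i
                rw [smul_smul, mul_div_cancel₀ _ h0]
              rw [Finset.sum_congr rfl fun i _ => this i]
              abel
            calc ‖c (Fin.last n)‖ * δ
                ≤ ‖c (Fin.last n)‖ * ‖bl + ∑ i : Fin n,
                    (c i.castSucc / c (Fin.last n)) • b i.castSucc‖ := by
                  exact mul_le_mul_of_nonneg_left (hδfar _) (norm_nonneg _)
              _ = ‖x‖ := by rw [this, norm_smul]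
          have := le_trans hkey hcR
          have h1 : ‖c (Fin.last n)‖ ≤ R / δ := (le_div_iff₀ hδ0).mpr this
          exact le_trans h1 (le_max_left _ _)
      -- bound on the rest
      have hy : ‖∑ i : Fin n, c i.castSucc • b i.castSucc‖ ≤ max R 0 + Q * ‖bl‖ := by
        have h1 : (∑ i : Fin n, c i.castSucc • b i.castSucc) = x - c (Fin.last n) • bl := by
          rw [hxsplit]; abel
        rw [h1]
        calc ‖x - c (Fin.last n) • bl‖ ≤ ‖x‖ + ‖c (Fin.last n) • bl‖ := norm_sub_le _ _
          _ ≤ max R 0 + Q * ‖bl‖ := by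
              refine add_le_add (le_trans hcR (le_max_left _ _)) ?_
              rw [norm_smul]
              exact mul_le_mul_of_nonneg_right hclast (norm_nonneg _)
      have hTy := hM' T m hm (fun i => hTb i.castSucc) (fun i => c i.castSucc) hy
      calc ‖T x‖ = ‖T (∑ i : Fin n, c i.castSucc • b i.castSucc) +
            c (Fin.last n) • T bl‖ := by
            rw [hxsplit, map_add, map_smul]
        _ ≤ ‖T (∑ i : Fin n, c i.castSucc • b i.castSucc)‖ + ‖c (Fin.last n) • T bl‖ :=
            norm_add_le _ _
        _ ≤ M' * m + Q * m := by
            refine add_le_add hTy ?_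
            rw [norm_smul]
            exact mul_le_mul hclast (hTb _) (norm_nonneg _) hQ0
        _ = (M' + Q) * m := by ring
    · -- the last vector is approximable by the span of the others
      push_neg at hδ
      obtain ⟨M', hM'0, hM'⟩ := ih (fun i => b i.castSucc) (max R 0 + 1)
      refine ⟨M', hM'0, fun T m hm hTb c hcR => ?_⟩
      set x : E := ∑ i, c i • b i with hx
      have hxsplit : x = (∑ i : Fin n, c i.castSucc • b i.castSucc) + c (Fin.last n) • bl := by
        rw [hx, Fin.sum_univ_castSucc]
      -- show `‖T x‖ ≤ M' * m + θ` for every `θ > 0`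
      have hθ : ∀ θ : ℝ, 0 < θ → ‖T x‖ ≤ M' * m + θ := by
        intro θ hθ0
        set cl : k := c (Fin.last n) with hcl
        set ε : ℝ := min ((‖cl‖ + 1)⁻¹) (θ / ((‖cl‖ + 1) * (‖T‖ + 1))) with hε
        have hcl1 : (0:ℝ) < ‖cl‖ + 1 := by positivity
        have hε0 : 0 < ε := by
          apply lt_min
          · positivity
          · positivity
        obtain ⟨a, ha⟩ := hδ ε hε0
        set w : E := bl + ∑ i, a i • b i.castSucc with hw
        set y : E := ∑ i : Fin n, (c i.castSucc - cl * a i) • b i.castSucc with hy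
        have hxy : x = y + cl • w := by
          rw [hxsplit, hy, hw, smul_add, Finset.smul_sum]
          rw [Finset.sum_congr rfl fun (i : Fin n) _ => sub_smul (c i.castSucc) (cl * a i)
            (b i.castSucc), Finset.sum_sub_distrib]
          rw [Finset.sum_congr rfl fun (i : Fin n) _ => (smul_smul cl (a i) (b i.castSucc))]
          abel
        have hyR : ‖y‖ ≤ max R 0 + 1 := by
          have h1 : y = x - cl • w := by rw [hxy]; abel
          rw [h1]
          calc ‖x - cl • w‖ ≤ ‖x‖ + ‖cl • w‖ := norm_sub_le _ _
            _ ≤ max R 0 + 1 := by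
                refine add_le_add (le_trans hcR (le_max_left _ _)) ?_
                rw [norm_smul]
                calc ‖cl‖ * ‖w‖ ≤ (‖cl‖ + 1) * ε := by
                      refine mul_le_mul (by linarith) (le_of_lt ha) (norm_nonneg _) (le_of_lt hcl1)
                  _ ≤ (‖cl‖ + 1) * (‖cl‖ + 1)⁻¹ := by
                      exact mul_le_mul_of_nonneg_left (min_le_left _ _) (le_of_lt hcl1)
                  _ = 1 := mul_inv_cancel₀ (ne_of_gt hcl1)
        have hTy := hM' T m hm (fun i => hTb i.castSucc) (fun i => c i.castSucc - cl * a i) hyR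
        calc ‖T x‖ = ‖T y + cl • T w‖ := by rw [hxy, map_add, map_smul]
          _ ≤ ‖T y‖ + ‖cl • T w‖ := norm_add_le _ _
          _ ≤ M' * m + θ := by
              refine add_le_add hTy ?_
              rw [norm_smul]
              calc ‖cl‖ * ‖T w‖ ≤ (‖cl‖ + 1) * ((‖T‖ + 1) * ε) := by
                    refine mul_le_mul (by linarith) ?_ (norm_nonneg _) (le_of_lt hcl1)
                    calc ‖T w‖ ≤ ‖T‖ * ‖w‖ := T.le_opNorm w
                      _ ≤ (‖T‖ + 1) * ε := by
                          refine mul_le_mul (by linarith) (le_of_lt ha) (norm_nonneg _)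
                            (by positivity)
                _ = ((‖cl‖ + 1) * (‖T‖ + 1)) * ε := by ring
                _ ≤ ((‖cl‖ + 1) * (‖T‖ + 1)) * (θ / ((‖cl‖ + 1) * (‖T‖ + 1))) := by
                    exact mul_le_mul_of_nonneg_left (min_le_right _ _) (by positivity)
                _ = θ := by
                    field_simp
      by_contra hcon
      push_neg at hcon
      have := hθ ((‖T x‖ - M' * m) / 2) (by linarith)
      linarith

/-- Bounding a representation over a bounded set `Ω` by its values on a "Zariski
dense" subset `Ω₀` (in the sense that `ρ(Ω)` lies in the linear span of `ρ(Ω₀)`).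
There exists a constant `M` such that for every endomorphism `Λ` of `V`, every
`v ∈ V`, and every bound `c` on `‖Λ(ω₀ · v)‖` over `ω₀ ∈ Ω₀`, one has
`‖Λ(ω · v)‖ ≤ M · c` for all `ω ∈ Ω`. -/
theorem bound_on_representation_from_zariski_dense_subset {k G V : Type*}
    [NontriviallyNormedField k] [Monoid G]
    [NormedAddCommGroup V] [NormedSpace k V] [FiniteDimensional k V]
    (ρ : G →* (V →L[k] V)) (Ω₀ Ω : Set G) (hsub : Ω₀ ⊆ Ω)
    (hbdd : ∃ R : ℝ, ∀ ω ∈ Ω, ‖ρ ω‖ ≤ R)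
    (hspan : ∀ ω ∈ Ω, ρ ω ∈ Submodule.span k ((fun g => ρ g) '' Ω₀)) :
    ∃ M : ℝ, ∀ (Λ : V →L[k] V) (v : V) (c : ℝ),
      (∀ ω₀ ∈ Ω₀, ‖Λ (ρ ω₀ v)‖ ≤ c) →
      ∀ ω ∈ Ω, ‖Λ (ρ ω v)‖ ≤ M * c := by
  classical
  obtain ⟨R, hR⟩ := hbdd
  rcases Set.eq_empty_or_nonempty Ω₀ with h0 | ⟨ω₀', hω₀'⟩
  · -- degenerate case: `Ω₀` empty, so `ρ ω = 0` for all `ω ∈ Ω`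
    refine ⟨0, fun Λ v c hc ω hω => ?_⟩
    have h := hspan ω hω
    rw [h0, Set.image_empty, Submodule.span_empty, Submodule.mem_bot] at h
    simp [h]
  · set S : Set (V →L[k] V) := (fun g => ρ g) '' Ω₀ with hS
    -- choose a finite subset of `S` with the same span
    have hfd : FiniteDimensional k (V →L[k] V) :=
      FiniteDimensional.of_injective (ContinuousLinearMap.coeLM k :
        (V →L[k] V) →ₗ[k] (V →ₗ[k] V)) ContinuousLinearMap.coe_injective
    obtain ⟨b, hb_sub, hb_span, hb_li⟩ := exists_linearIndependent k S
    have hb_fin : b.Finite := hb_li.setFinite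
    haveI : Fintype b := hb_fin.fintype
    set n : ℕ := Fintype.card b with hn
    set e : Fin n ≃ b := (Fintype.equivFin b).symm with he
    set bb : Fin n → (V →L[k] V) := fun i => (e i : V →L[k] V) with hbb
    have hbrange : Set.range bb = b := by
      rw [hbb]
      have : Set.range (fun i => (e i : V →L[k] V)) = Subtype.val '' Set.range e := by
        rw [← Set.range_comp]; rfl
      rw [this, Equiv.range_eq_univ, Set.image_univ, Subtype.range_coe]
    obtain ⟨M, hM0, hM⟩ := key_comb_bound (k := k) (E := V →L[k] V) (F := V) n bb (max R 0)
    refine ⟨M, fun Λ v c hc ω hω => ?_⟩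
    have hc0 : 0 ≤ c := le_trans (norm_nonneg _) (hc ω₀' hω₀')
    -- the evaluation functional `A ↦ Λ (A v)`
    set T : (V →L[k] V) →L[k] V := Λ.comp (ContinuousLinearMap.apply k V v) with hT
    have hTapp : ∀ A : V →L[k] V, T A = Λ (A v) := fun A => rfl
    have hTb : ∀ i : Fin n, ‖T (bb i)‖ ≤ c := by
      intro i
      obtain ⟨g, hg, hgi⟩ := hb_sub (e i).2
      rw [hTapp, ← show ρ g = bb i from hgi]
      exact hc g hg
    -- write `ρ ω` as a linear combination of the `bb i`
    have hmem : ρ ω ∈ Submodule.span k (Set.range bb) := by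
      rw [hbrange, hb_span]
      exact hspan ω hω
    obtain ⟨co, hco⟩ := (Submodule.mem_span_range_iff_exists_fun k).mp hmem
    have hnorm : ‖∑ i, co i • bb i‖ ≤ max R 0 := by
      rw [hco]
      exact le_trans (hR ω hω) (le_max_left _ _)
    have := hM T c hc0 hTb co hnorm
    rw [hco, hTapp] at this
    exact this
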